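/- Every increasing path and every decreasing path on vertex set [1,n] is realized by T_{ijk}(n). -/

import Mathlib

/-- The sequence `T_ijk(n)`: element at position `a·n² + b·n + c` is `(a+1, b+1, c+1)`. -/
def Tijk (n : ℕ) : List (ℕ × ℕ × ℕ) :=
  (List.range n).flatMap fun a => (List.range n).flatMap fun b =>
    (List.range n).map fun c => (a + 1, b + 1, c + 1)

/-- The sequence `T_kij(n)`: element at position `a·n² + b·n + c` is `(b+1, c+1, a+1)`. -/
def Tkij (n : ℕ) : List (ℕ × ℕ × ℕ) :=
  (List.range n).flatMap fun a => (List.range n).flatMap fun b =>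
    (List.range n).map fun c => (b + 1, c + 1, a + 1)

/-- `T_ijk(n, i, j)`: the prefix of `T_ijk(n)` up to and including the tuple `(i, j, n)`. -/
def TijkPrefix (n i j : ℕ) : List (ℕ × ℕ × ℕ) :=
  (Tijk n).take ((i - 1) * n ^ 2 + (j - 1) * n + n)

/-- A path `P` (a list of vertices) is realized by a sequence `T` of 3-tuples:
either it has at most one edge, or some position `d` of `T` holds the tuple
`(first, last, split vertex p_x)` with both halves realized by the length-`d` prefix
(`d` here is 0-indexed, so `T.take d` is the prefix strictly before position `d`). -/
inductive Realized : List (ℕ × ℕ × ℕ) → List ℕ → Prop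
  | base (T : List (ℕ × ℕ × ℕ)) (P : List ℕ) (h : P.length ≤ 2) : Realized T P
  | step (T : List (ℕ × ℕ × ℕ)) (P : List ℕ) (d x : ℕ)
      (hd : d < T.length) (hx1 : 1 ≤ x) (hx2 : x ≤ P.length - 2)
      (ht : T.getD d default = (P.getD 0 0, P.getD (P.length - 1) 0, P.getD x 0))
      (h1 : Realized (T.take d) (P.take (x + 1)))
      (h2 : Realized (T.take d) (P.drop x)) : Realized T P

/-- A path with at least one edge, all of whose vertices lie in `[1, n]`. -/
def ValidPath (n : ℕ) (P : List ℕ) : Prop :=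
  2 ≤ P.length ∧ ∀ v ∈ P, 1 ≤ v ∧ v ≤ n

/-- Increasing path. -/
def Increasing (P : List ℕ) : Prop := P.Chain' (· < ·)

/-- Decreasing path. -/
def Decreasing (P : List ℕ) : Prop := P.Chain' (· > ·)

/-- Valley path: every interior vertex is at most the min of the endpoints. -/
def Valley (P : List ℕ) : Prop :=
  ∀ t, 1 ≤ t → t ≤ P.length - 2 →
    P.getD t 0 ≤ min (P.getD 0 0) (P.getD (P.length - 1) 0)

/-- Proper path: no two consecutive vertices `p_t, p_{t+1}` with `1 ≤ t ≤ k-2`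
both exceed the min of the endpoints. -/
def Proper (P : List ℕ) : Prop :=
  ¬ ∃ t, 1 ≤ t ∧ t ≤ P.length - 3 ∧
    min (P.getD 0 0) (P.getD (P.length - 1) 0) < P.getD t 0 ∧
    min (P.getD 0 0) (P.getD (P.length - 1) 0) < P.getD (t + 1) 0

/-- Total weight of a path: the sum of the weights of its consecutive edges. -/
def pathWeight (W : ℕ → ℕ → WithTop ℤ) (P : List ℕ) : WithTop ℤ :=
  ((P.zip P.tail).map fun q => W q.1 q.2).sum

/-- One relaxation step `A[i,j] ← min(A[i,j], A[i,k] + A[k,j])` for the tuple `(i,j,k)`. -/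
def relaxStep (A : ℕ → ℕ → WithTop ℤ) (t : ℕ × ℕ × ℕ) : ℕ → ℕ → WithTop ℤ :=
  fun i j => if i = t.1 ∧ j = t.2.1 then min (A i j) (A i t.2.2 + A t.2.2 j) else A i j

/-- Apply the relaxation steps of the sequence `T` in order, starting from `A`. -/
def relaxAll (A : ℕ → ℕ → WithTop ℤ) (T : List (ℕ × ℕ × ℕ)) : ℕ → ℕ → WithTop ℤ :=
  T.foldl relaxStep A

/-- No negative cycles on the vertex set `[1, n]`. -/
def NoNegCycle (n : ℕ) (W : ℕ → ℕ → WithTop ℤ) : Prop :=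
  ∀ P : List ℕ, 2 ≤ P.length → (∀ v ∈ P, 1 ≤ v ∧ v ≤ n) →
    P.getD 0 0 = P.getD (P.length - 1) 0 → 0 ≤ pathWeight W P

/-
The triple `(a, b, c)` sits at position `tijkIndex n a b c = (a - 1)n² + (b - 1)n + (c - 1)`
(counting from 0) of `T_ijk(n)`; write `pos(a, b, c)` for it.
An increasing path `p₀ < ⋯ < p_k` is split at `p_{k-1}`: its last edge needs no triple, and
inductively `p₀ ⋯ p_{k-1}` is realized by the prefix of length `(p₀ - 1)n² + p_{k-1}n`, which
ends before `pos(p₀, p_k, p_{k-1})` because `p_{k-1} < p_k`. A decreasing path is split at `p₁`: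
its first edge needs no triple, and inductively `p₁ ⋯ p_k` is realized by the prefix of length
`p₁n²`, which ends before `pos(p₀, p_k, p₁)` because `p₁ < p₀`.
-/

theorem List.getElem_flatMap_of_length_eq {α β : Type*} {f : α → List β} {m : ℕ}
    (hf : ∀ x, (f x).length = m) :
    ∀ {l : List α} {a r : ℕ} (ha : a < l.length) (hr : r < m)
      (h : a * m + r < (l.flatMap f).length), (l.flatMap f)[a * m + r] = (f l[a])[r]'(by rwa [hf])
  | x :: l, 0, r, _, hr, _ => by
    simp only [List.flatMap_cons, zero_mul, zero_add, List.getElem_cons_zero]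
    exact List.getElem_append_left (by rwa [hf])
  | x :: l, a + 1, r, ha, hr, h => by
    simp only [List.flatMap_cons, List.getElem_cons_succ]
    rw [List.getElem_append_right (by rw [hf]; nlinarith)]
    simp only [hf, show (a + 1) * m + r - m = a * m + r by rw [add_one_mul]; omega]
    exact List.getElem_flatMap_of_length_eq hf (by simpa using ha) hr _

def tijkIndex (n a b c : ℕ) : ℕ := (a - 1) * n ^ 2 + (b - 1) * n + (c - 1)

section tijkIndex

variable {n a b c : ℕ}

theorem tijkIndex_lt_add (hb : 1 ≤ b) (hc : 1 ≤ c) (hcn : c ≤ n) :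
    tijkIndex n a b c < (a - 1) * n ^ 2 + b * n := by
  obtain ⟨b, rfl⟩ := Nat.exists_eq_add_of_le' hb
  unfold tijkIndex
  rw [Nat.add_sub_cancel, add_one_mul]
  omega

theorem Nat.sub_one_mul_sq_add_mul_le (ha : 1 ≤ a) (hbn : b ≤ n) :
    (a - 1) * n ^ 2 + b * n ≤ a * n ^ 2 := by
  obtain ⟨a, rfl⟩ := Nat.exists_eq_add_of_le' ha
  rw [Nat.add_sub_cancel, add_one_mul, sq]
  nlinarith

theorem tijkIndex_lt_mul_sq (ha : 1 ≤ a) (hb : 1 ≤ b) (hbn : b ≤ n) (hc : 1 ≤ c) (hcn : c ≤ n) :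
    tijkIndex n a b c < a * n ^ 2 :=
  (tijkIndex_lt_add hb hc hcn).trans_le (Nat.sub_one_mul_sq_add_mul_le ha hbn)

theorem tijkIndex_lt_cube (ha : 1 ≤ a) (han : a ≤ n) (hb : 1 ≤ b) (hbn : b ≤ n) (hc : 1 ≤ c)
    (hcn : c ≤ n) : tijkIndex n a b c < n ^ 3 :=
  calc tijkIndex n a b c < a * n ^ 2 := tijkIndex_lt_mul_sq ha hb hbn hc hcn
    _ ≤ n * n ^ 2 := Nat.mul_le_mul_right _ han
    _ = n ^ 3 := by ring

theorem add_mul_le_tijkIndex (hcb : c < b) :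
    (a - 1) * n ^ 2 + c * n ≤ tijkIndex n a b c := by
  have : c * n ≤ (b - 1) * n := Nat.mul_le_mul_right n (by omega)
  unfold tijkIndex
  omega

theorem mul_sq_le_tijkIndex (hca : c < a) : c * n ^ 2 ≤ tijkIndex n a b c := by
  have : c * n ^ 2 ≤ (a - 1) * n ^ 2 := Nat.mul_le_mul_right _ (by omega)
  unfold tijkIndex
  omega

end tijkIndex

theorem length_Tijk (n : ℕ) : (Tijk n).length = n ^ 3 := by
  simp [Tijk, pow_succ, mul_assoc]

theorem getD_Tijk_tijkIndex {n a b c : ℕ} (ha : 1 ≤ a) (han : a ≤ n) (hb : 1 ≤ b) (hbn : b ≤ n)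
    (hc : 1 ≤ c) (hcn : c ≤ n) : (Tijk n).getD (tijkIndex n a b c) default = (a, b, c) := by
  have hlt := tijkIndex_lt_cube ha han hb hbn hc hcn
  have hbc : (b - 1) * n + (c - 1) < n * n := by
    have := Nat.mul_le_mul_right n (show b - 1 + 1 ≤ n by omega)
    rw [add_one_mul] at this
    omega
  rw [List.getD_eq_getElem _ _ (by rwa [length_Tijk])]
  simp only [Tijk, tijkIndex, sq, add_assoc]
  rw [List.getElem_flatMap_of_length_eq (m := n * n) (by simp) (by simp; omega) hbc,
    List.getElem_flatMap_of_length_eq (m := n) (by simp) (by simp; omega) (by omega)]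
  simp only [List.getElem_range, List.getElem_map]
  rw [Nat.sub_add_cancel ha, Nat.sub_add_cancel hb, Nat.sub_add_cancel hc]

theorem List.getD_take_of_lt {α : Type*} {l : List α} {i m : ℕ} (d : α) (h : i < m) :
    (l.take m).getD i d = l.getD i d := by
  simp [List.getD_eq_getElem?_getD, h]

theorem List.getD_drop {α : Type*} (l : List α) (k i : ℕ) (d : α) :
    (l.drop k).getD i d = l.getD (k + i) d := by
  simp [List.getD_eq_getElem?_getD]

theorem List.getD_mem {α : Type*} {l : List α} {i : ℕ} (d : α) (h : i < l.length) :
    l.getD i d ∈ l := by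
  rw [List.getD_eq_getElem _ _ h]
  exact List.getElem_mem h

theorem Increasing.getD_lt {P : List ℕ} (h : Increasing P) {i j : ℕ} (hij : i < j)
    (hj : j < P.length) : P.getD i 0 < P.getD j 0 := by
  rw [List.getD_eq_getElem _ _ (hij.trans hj), List.getD_eq_getElem _ _ hj]
  exact List.pairwise_iff_getElem.mp (List.isChain_iff_pairwise.mp h) i j _ hj hij

theorem Decreasing.getD_lt {P : List ℕ} (h : Decreasing P) {i j : ℕ} (hij : i < j)
    (hj : j < P.length) : P.getD j 0 < P.getD i 0 := by
  rw [List.getD_eq_getElem _ _ (hij.trans hj), List.getD_eq_getElem _ _ hj]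
  exact List.pairwise_iff_getElem.mp (List.isChain_iff_pairwise.mp h) i j _ hj hij

theorem Realized.mono {T T' : List (ℕ × ℕ × ℕ)} {P : List ℕ} (h : Realized T P) (hT : T <+: T') :
    Realized T' P := by
  obtain ⟨s, rfl⟩ := hT
  cases h with
  | base _ _ h => exact .base _ _ h
  | step _ _ d x hd hx1 hx2 ht h1 h2 =>
    refine .step _ _ d x (hd.trans_le (by simp)) hx1 hx2 ?_ ?_ ?_
    · rwa [List.getD_append _ _ _ _ hd]
    · rwa [List.take_append_of_le_length hd.le]
    · rwa [List.take_append_of_le_length hd.le]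

theorem Realized.take_of_split {T : List (ℕ × ℕ × ℕ)} {P : List ℕ} {d e m x : ℕ}
    (hd : d < T.length) (hde : d < e) (hx1 : 1 ≤ x) (hx2 : x ≤ P.length - 2)
    (ht : T.getD d default = (P.getD 0 0, P.getD (P.length - 1) 0, P.getD x 0)) (hmd : m ≤ d)
    (h1 : Realized (T.take m) (P.take (x + 1))) (h2 : Realized (T.take m) (P.drop x)) :
    Realized (T.take e) P := by
  have hprefix : T.take m <+: (T.take e).take d := by
    rw [List.take_take, min_eq_left hde.le]
    exact List.take_prefix_take_left hmd
  refine .step _ _ d x (by simpa using ⟨hde, hd⟩) hx1 hx2 ?_ (h1.mono hprefix) (h2.mono hprefix)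
  rwa [List.getD_take_of_lt _ hde]

theorem Realized.take_Tijk_of_split {n e m x : ℕ} {P : List ℕ} (hv : ∀ v ∈ P, 1 ≤ v ∧ v ≤ n)
    (hx1 : 1 ≤ x) (hx2 : x ≤ P.length - 2)
    (he : tijkIndex n (P.getD 0 0) (P.getD (P.length - 1) 0) (P.getD x 0) < e)
    (hm : m ≤ tijkIndex n (P.getD 0 0) (P.getD (P.length - 1) 0) (P.getD x 0))
    (h1 : Realized ((Tijk n).take m) (P.take (x + 1)))
    (h2 : Realized ((Tijk n).take m) (P.drop x)) : Realized ((Tijk n).take e) P := by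
  have hv' : ∀ i < P.length, 1 ≤ P.getD i 0 ∧ P.getD i 0 ≤ n := fun i hi =>
    hv _ (List.getD_mem _ hi)
  obtain ⟨ha, han⟩ := hv' 0 (by omega)
  obtain ⟨hb, hbn⟩ := hv' (P.length - 1) (by omega)
  obtain ⟨hc, hcn⟩ := hv' x (by omega)
  refine Realized.take_of_split ?_ he hx1 hx2 ?_ hm h1 h2
  · rw [length_Tijk]
    exact tijkIndex_lt_cube ha han hb hbn hc hcn
  · exact getD_Tijk_tijkIndex ha han hb hbn hc hcn

theorem Realized.take_Tijk_of_increasing {n : ℕ} {P : List ℕ} (hinc : Increasing P)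
    (hv : ∀ v ∈ P, 1 ≤ v ∧ v ≤ n) :
    Realized ((Tijk n).take ((P.getD 0 0 - 1) * n ^ 2 + P.getD (P.length - 1) 0 * n)) P := by
  rcases le_or_gt P.length 2 with hL | hL
  · exact .base _ _ hL
  have ih := Realized.take_Tijk_of_increasing (P := P.take (P.length - 1))
    (hinc.take _) (fun v hv' => hv v (List.mem_of_mem_take hv'))
  rw [List.length_take, min_eq_left (by omega), List.getD_take_of_lt _ (by omega),
    List.getD_take_of_lt _ (by omega), show P.length - 1 - 1 = P.length - 2 by omega] at ih
  have hcb := hinc.getD_lt (by omega : P.length - 2 < P.length - 1) (by omega)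
  obtain ⟨hc, hcn⟩ := hv _ (List.getD_mem 0 (by omega : P.length - 2 < P.length))
  refine Realized.take_Tijk_of_split hv (x := P.length - 2) (by omega) le_rfl
    (tijkIndex_lt_add (by omega) hc hcn) (add_mul_le_tijkIndex hcb) ?_ (.base _ _ (by simp; omega))
  rwa [show P.length - 2 + 1 = P.length - 1 by omega]
termination_by P.length

theorem Realized.take_Tijk_of_decreasing {n : ℕ} {P : List ℕ} (hdec : Decreasing P)
    (hv : ∀ v ∈ P, 1 ≤ v ∧ v ≤ n) : Realized ((Tijk n).take (P.getD 0 0 * n ^ 2)) P := by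
  rcases le_or_gt P.length 2 with hL | hL
  · exact .base _ _ hL
  have ih := Realized.take_Tijk_of_decreasing (P := P.drop 1)
    (hdec.drop 1) (fun v hv' => hv v (List.mem_of_mem_drop hv'))
  rw [List.getD_drop] at ih
  have hca := hdec.getD_lt zero_lt_one (by omega)
  have hv' : ∀ i < P.length, 1 ≤ P.getD i 0 ∧ P.getD i 0 ≤ n := fun i hi =>
    hv _ (List.getD_mem _ hi)
  obtain ⟨ha, -⟩ := hv' 0 (by omega)
  obtain ⟨hb, hbn⟩ := hv' (P.length - 1) (by omega)
  obtain ⟨hc, hcn⟩ := hv' 1 (by omega)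
  exact Realized.take_Tijk_of_split hv (x := 1) le_rfl (by omega)
    (tijkIndex_lt_mul_sq ha hb hbn hc hcn) (mul_sq_le_tijkIndex hca) (.base _ _ (by simp)) ih
termination_by P.length

/-- Every increasing path and every decreasing path on `[1,n]` is realized by
`T_ijk(n)`. -/
theorem stmt17 (n : ℕ) (P : List ℕ) (hP : ValidPath n P)
    (h : Increasing P ∨ Decreasing P) : Realized (Tijk n) P := by
  rcases h with hinc | hdec
  · exact (Realized.take_Tijk_of_increasing hinc hP.2).mono (List.take_prefix _ _)
  · exact (Realized.take_Tijk_of_decreasing hdec hP.2).mono (List.take_prefix _ _)
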